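/- If (M_k)_{k∈ℕ} is a sequence of sets in 𝓜_ln, then ⋃_{k∈ℕ} M_k belongs to 𝓜_ln; hence 𝓜_ln is a σ-ideal of subsets of ℝ. -/
import Mathlib

lemma pair_bound (k n : ℕ) : Nat.pair k n + 2 ≤ ((k+2)*(n+2))^2 := by
  rw [Nat.pair]; split
  · calc n*n + k + 2 ≤ (n+2)^2 := by nlinarith
      _ ≤ ((k+2)*(n+2))^2 := Nat.pow_le_pow_left (Nat.le_mul_of_pos_left _ (by omega)) 2
  · calc k*k + k + n + 2 ≤ (k+2)^2 := by nlinarith [Nat.le_of_not_lt ‹¬ k < n›]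
      _ ≤ ((k+2)*(n+2))^2 := Nat.pow_le_pow_left (Nat.le_mul_of_pos_right _ (by omega)) 2

lemma key_ineq (ε : ℝ) (hε0 : 0 < ε) (hε1 : ε ≤ 1/2) (k n : ℕ) :
    (ε ^ (2 + 2*Real.log ((k:ℝ)+2)/Real.log 2)) ^ Real.log ((n:ℝ)+2)
      ≤ ε ^ Real.log ((Nat.pair k n : ℝ) + 2) := by
  have hk0 : (0:ℝ) ≤ (k:ℝ) := Nat.cast_nonneg k
  have hn0 : (0:ℝ) ≤ (n:ℝ) := Nat.cast_nonneg n
  rw [← Real.rpow_mul hε0.le]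
  apply Real.rpow_le_rpow_of_exponent_ge hε0 (by linarith)
  have hL2 : (0:ℝ) < Real.log 2 := Real.log_pos (by norm_num)
  have hLn : Real.log 2 ≤ Real.log ((n:ℝ)+2) := by
    apply Real.log_le_log (by norm_num); linarith
  have hLk : 0 ≤ Real.log ((k:ℝ)+2) := Real.log_nonneg (by linarith)
  have h1 : Real.log ((Nat.pair k n : ℝ) + 2)
      ≤ 2*(Real.log ((k:ℝ)+2) + Real.log ((n:ℝ)+2)) := by
    have hcast : ((Nat.pair k n : ℝ) + 2) ≤ (((k:ℝ)+2)*((n:ℝ)+2))^2 := by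
      have := (Nat.cast_le (α := ℝ)).2 (pair_bound k n)
      push_cast at this ⊢
      linarith
    calc Real.log ((Nat.pair k n : ℝ) + 2)
        ≤ Real.log ((((k:ℝ)+2)*((n:ℝ)+2))^2) := Real.log_le_log (by positivity) hcast
      _ = 2*(Real.log ((k:ℝ)+2) + Real.log ((n:ℝ)+2)) := by
          rw [Real.log_pow, Real.log_mul (by positivity) (by positivity)]
          push_cast; ring
  have h2 : 2*Real.log ((k:ℝ)+2) ≤ 2*Real.log ((k:ℝ)+2)/Real.log 2 * Real.log ((n:ℝ)+2) := by
    rw [div_mul_eq_mul_div, le_div_iff₀ hL2]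
    nlinarith
  nlinarith [h1, h2, hLn, hLk]

open MeasureTheory Filter

/-- `S ⊆ ℝ` is an interval. -/
def IsIntervalSet (S : Set ℝ) : Prop := S.OrdConnected

/-- A set `M ⊆ ℝ` is microscopic if for each `ε > 0` there is a sequence of intervals
`(J n)` covering `M` with `|J n| ≤ ε ^ (n + 1)` for each `n`. -/
def Microscopic (M : Set ℝ) : Prop :=
  ∀ ε : ℝ, 0 < ε → ∃ J : ℕ → Set ℝ,
    (∀ n, IsIntervalSet (J n)) ∧ M ⊆ (⋃ n, J n) ∧
      ∀ n, volume (J n) ≤ ENNReal.ofReal (ε ^ (n + 1))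

/-- A set `M ⊆ ℝ` belongs to `𝓜_ln` if for every `ε > 0` there is a sequence of intervals
`(J n)` covering `M` with `|J n| ≤ ε ^ (ln (n + 2))`. -/
def MLn (M : Set ℝ) : Prop :=
  ∀ ε : ℝ, 0 < ε → ∃ J : ℕ → Set ℝ,
    (∀ n, IsIntervalSet (J n)) ∧ M ⊆ (⋃ n, J n) ∧
      ∀ n, volume (J n) ≤ ENNReal.ofReal (ε ^ Real.log ((n : ℝ) + 2))

theorem mln_iUnion (M : ℕ → Set ℝ) (hM : ∀ k, MLn (M k)) : MLn (⋃ k, M k) := by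
  intro ε hε
  set ε' : ℝ := min ε (1/2) with hε'def
  have hε'0 : 0 < ε' := lt_min hε (by norm_num)
  have hε'1 : ε' ≤ 1/2 := min_le_right _ _
  have hcov : ∀ k : ℕ, ∃ J : ℕ → Set ℝ,
      (∀ n, IsIntervalSet (J n)) ∧ M k ⊆ (⋃ n, J n) ∧
        ∀ n, volume (J n) ≤ ENNReal.ofReal
          ((ε' ^ (2 + 2*Real.log ((k:ℝ)+2)/Real.log 2)) ^ Real.log ((n : ℝ) + 2)) :=
    fun k => hM k _ (Real.rpow_pos_of_pos hε'0 _)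
  choose J hJint hJcov hJvol using hcov
  refine ⟨fun m => J (Nat.unpair m).1 (Nat.unpair m).2, fun m => hJint _ _, ?_, ?_⟩
  · intro x hx
    obtain ⟨k, hk⟩ := Set.mem_iUnion.1 hx
    obtain ⟨n, hn⟩ := Set.mem_iUnion.1 (hJcov k hk)
    exact Set.mem_iUnion.2 ⟨Nat.pair k n, by simpa [Nat.unpair_pair] using hn⟩
  · intro m
    have hle : (ε' ^ (2 + 2*Real.log (((Nat.unpair m).1:ℝ)+2)/Real.log 2))
        ^ Real.log (((Nat.unpair m).2 : ℝ) + 2) ≤ ε ^ Real.log ((m : ℝ) + 2) := by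
      have h1 := key_ineq ε' hε'0 hε'1 (Nat.unpair m).1 (Nat.unpair m).2
      rw [Nat.pair_unpair] at h1
      refine h1.trans (Real.rpow_le_rpow hε'0.le (min_le_left _ _) ?_)
      apply Real.log_nonneg
      have : (0:ℝ) ≤ (m:ℝ) := Nat.cast_nonneg m
      linarith
    exact (hJvol _ _).trans (ENNReal.ofReal_le_ofReal hle)
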